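/- arXiv:math/0305359 — 8 statements merged into one kernel-verified Lean document; each statement's English description precedes it below -/
import Mathlib

section
/- For every bounded self-adjoint operator T on a complex Hilbert space H, the infimum over real λ of the operator norm of T + λI equals half the diameter of the spectrum of T. -/
/-!
A self-adjoint `a` has real spectrum with extreme points `c ≤ b`, and its norm is the spectral
radius `max b (-c)`. Shifting by `l` shifts the spectrum, so
`‖a + l • 1‖ = max (b + l) (-(c + l))`, which is minimised at the midpoint `l = -(b + c) / 2`
with value `(b - c) / 2`, half the diameter of the spectrum.
-/

open Set
open scoped Pointwise

theorem iInf_max_add_neg_add (b c : ℝ) :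
    ⨅ l : ℝ, max (b + l) (-(c + l)) = (b - c) / 2 := by
  have half_le : ∀ l : ℝ, (b - c) / 2 ≤ max (b + l) (-(c + l)) := fun l => by
    rw [le_max_iff]; by_contra! h; linarith
  have hbdd : BddBelow (range fun l : ℝ => max (b + l) (-(c + l))) :=
    ⟨(b - c) / 2, by rintro _ ⟨l, rfl⟩; exact half_le l⟩
  refine le_antisymm ?_ (le_ciInf half_le)
  calc ⨅ l : ℝ, max (b + l) (-(c + l)) ≤ max (b + -(b + c) / 2) (-(c + -(b + c) / 2)) :=
        ciInf_le hbdd _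
    _ = (b - c) / 2 := by rw [max_eq_left (by linarith)]; ring

theorem spectrum_add_smul_one {R A : Type*} [CommRing R] [Ring A] [Algebra R A] (a : A) (r : R) :
    spectrum R (a + r • (1 : A)) = spectrum R a + ({r} : Set R) := by
  rw [← Algebra.algebraMap_eq_smul_one, spectrum.add_singleton_eq]

namespace IsSelfAdjoint

variable {A : Type*} [CStarAlgebra A] {a : A}

theorem norm_eq_max_sSup_neg_sInf_spectrum (ha : IsSelfAdjoint a) :
    ‖a‖ = max (sSup (spectrum ℝ a)) (-sInf (spectrum ℝ a)) := by
  rcases subsingleton_or_nontrivial A with hA | hA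
  · simp [Subsingleton.elim a 0, spectrum.of_subsingleton]
  set σ := spectrum ℝ a
  have hne : σ.Nonempty := ContinuousFunctionalCalculus.spectrum_nonempty a ha
  have hbdd : Bornology.IsBounded σ := (spectrum.isCompact a).isBounded
  have habs : ∀ x ∈ σ, |x| ≤ ‖a‖ := fun x hx => spectrum.norm_le_norm_of_mem hx
  refine le_antisymm ?_ (max_le ?_ ?_)
  · rcases CStarAlgebra.norm_or_neg_norm_mem_spectrum ha with h | h
    · exact le_max_of_le_left (le_csSup hbdd.bddAbove h)
    · exact le_max_of_le_right (le_neg.mp (csInf_le hbdd.bddBelow h))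
  · exact csSup_le hne fun x hx => (le_abs_self x).trans (habs x hx)
  · exact neg_le.mp (le_csInf hne fun x hx => neg_le.mp ((neg_le_abs x).trans (habs x hx)))

theorem norm_add_smul_one [Nontrivial A] (ha : IsSelfAdjoint a) (l : ℝ) :
    ‖a + l • (1 : A)‖ = max (sSup (spectrum ℝ a) + l) (-(sInf (spectrum ℝ a) + l)) := by
  have hne : (spectrum ℝ a).Nonempty := ContinuousFunctionalCalculus.spectrum_nonempty a ha
  have hbdd : Bornology.IsBounded (spectrum ℝ a) := (spectrum.isCompact a).isBounded
  have hla : IsSelfAdjoint (a + l • (1 : A)) := ha.add ((IsSelfAdjoint.all l).smul (.one A))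
  rw [hla.norm_eq_max_sSup_neg_sInf_spectrum, spectrum_add_smul_one,
    csSup_add hne hbdd.bddAbove (singleton_nonempty l) bddAbove_singleton, csSup_singleton,
    csInf_add hne hbdd.bddBelow (singleton_nonempty l) bddBelow_singleton, csInf_singleton]

theorem diam_spectrum_eq_sSup_sub_sInf (ha : IsSelfAdjoint a) :
    Metric.diam (spectrum ℂ a) = sSup (spectrum ℝ a) - sInf (spectrum ℝ a) := by
  rw [← ha.spectrumRestricts.algebraMap_image, Complex.coe_algebraMap,
    Complex.isometry_ofReal.diam_image, Real.diam_eq (spectrum.isCompact a).isBounded]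

theorem iInf_norm_add_smul_one_eq_half_diam_spectrum (ha : IsSelfAdjoint a) :
    ⨅ l : ℝ, ‖a + l • (1 : A)‖ = Metric.diam (spectrum ℂ a) / 2 := by
  rcases subsingleton_or_nontrivial A with hA | hA
  · simp [Subsingleton.elim _ (0 : A), spectrum.of_subsingleton]
  simp only [ha.norm_add_smul_one, iInf_max_add_neg_add, ha.diam_spectrum_eq_sSup_sub_sInf]

end IsSelfAdjoint

variable {H : Type*} [NormedAddCommGroup H] [InnerProductSpace ℂ H] [CompleteSpace H]

theorem iInf_norm_add_smul_one_eq_half_diam_spectrum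
    (T : H →L[ℂ] H) (hT : IsSelfAdjoint T) :
    ⨅ l : ℝ, ‖T + l • (1 : H →L[ℂ] H)‖ = Metric.diam (spectrum ℂ T) / 2 :=
  hT.iInf_norm_add_smul_one_eq_half_diam_spectrum
end

section
/- For every bounded self-adjoint operator T on a complex Hilbert space H, the maximal deviation ‖T‖_v equals half the diameter of the spectrum of T. -/
open scoped InnerProductSpace

variable {H : Type*} [NormedAddCommGroup H] [InnerProductSpace ℂ H] [CompleteSpace H]

/-- Variance of a bounded observable `T` at a vector `φ`. -/
noncomputable def observableVar (T : H →L[ℂ] H) (φ : H) : ℝ :=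
  (⟪T (T φ), φ⟫_ℂ).re - ((⟪T φ, φ⟫_ℂ).re) ^ 2

/-- Maximal deviation of a bounded observable `T`. -/
noncomputable def maxDev (T : H →L[ℂ] H) : ℝ :=
  ⨆ φ : {x : H // ‖x‖ = 1}, Real.sqrt (observableVar T φ)

/-!
With `c` real and `φ` a unit vector, `var(T, φ) = ‖(T - c) φ‖² - (⟪T φ, φ⟫ - c)²`. Taking `c` the
midpoint of `σ(T) ⊆ ℝ` gives `var(T, φ) ≤ ‖T - c‖² = (diam σ(T) / 2)²`. Conversely, for
`a, b ∈ σ(T)`, the functional calculus applied to tents with disjoint supports around `a` and `b`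
yields orthogonal unit approximate eigenvectors `u`, `w`, and `(u + w) / √2` has variance close to
`((a - b) / 2)²`.
-/

open Filter Topology

theorem ContinuousLinearMap.exists_mem_range_norm_eq_one_norm_apply_le
    {𝕜 E : Type*} [RCLike 𝕜] [NormedAddCommGroup E] [NormedSpace 𝕜 E]
    (A P : E →L[𝕜] E) (hP : P ≠ 0) :
    ∃ u ∈ Set.range P, ‖u‖ = 1 ∧ ‖A u‖ ≤ 2 * ‖A * P‖ / ‖P‖ := by
  have hP0 : 0 < ‖P‖ := norm_pos_iff.mpr hP
  obtain ⟨v, hv, hPv⟩ := P.exists_lt_apply_of_lt_opNorm (half_lt_self hP0)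
  have hPv0 : 0 < ‖P v‖ := by linarith
  refine ⟨((‖P v‖ : 𝕜))⁻¹ • P v, ⟨((‖P v‖ : 𝕜))⁻¹ • v, map_smul P _ v⟩,
    norm_smul_inv_norm (norm_pos_iff.mp hPv0), ?_⟩
  calc ‖A (((‖P v‖ : 𝕜))⁻¹ • P v)‖ = ‖(A * P) v‖ / ‖P v‖ := by
        rw [map_smul, norm_smul, norm_inv, RCLike.norm_ofReal, abs_norm, inv_mul_eq_div]; rfl
    _ ≤ ‖A * P‖ / (‖P‖ / 2) := by
        gcongr
        calc ‖(A * P) v‖ ≤ ‖A * P‖ * ‖v‖ := (A * P).le_opNorm v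
          _ ≤ ‖A * P‖ := mul_le_of_le_one_right (norm_nonneg _) hv.le
    _ = 2 * ‖A * P‖ / ‖P‖ := by field_simp

theorem Real.abs_sub_midpoint_le_half_diam {s : Set ℝ} (hs : Bornology.IsBounded s) {x : ℝ}
    (hx : x ∈ s) : |x - (sInf s + sSup s) / 2| ≤ Metric.diam s / 2 := by
  rw [Real.diam_eq hs, abs_le]
  have := csInf_le hs.bddBelow hx
  have := le_csSup hs.bddAbove hx
  constructor <;> linarith

theorem IsSelfAdjoint.diam_spectrum_complex {A : Type*} [CStarAlgebra A] {a : A}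
    (ha : IsSelfAdjoint a) : Metric.diam (spectrum ℂ a) = Metric.diam (spectrum ℝ a) := by
  rw [← ha.spectrumRestricts.algebraMap_image]
  exact Complex.isometry_ofReal.diam_image _

noncomputable def tent (μ ε : ℝ) (x : ℝ) : ℝ := max 0 (1 - |x - μ| / ε)

section tent

variable {μ ε : ℝ}

@[fun_prop]
theorem continuous_tent (μ ε : ℝ) : Continuous (tent μ ε) := by
  unfold tent; fun_prop

@[simp] theorem tent_self (μ ε : ℝ) : tent μ ε μ = 1 := by simp [tent]

theorem tent_eq_zero (hε : 0 < ε) {x : ℝ} (hx : ε ≤ |x - μ|) : tent μ ε x = 0 :=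
  max_eq_left <| by linarith [(one_le_div hε).mpr hx]

theorem abs_sub_mul_tent_le (hε : 0 < ε) (x : ℝ) : |(x - μ) * tent μ ε x| ≤ ε := by
  rcases le_or_gt ε |x - μ| with hx | hx
  · simp [tent_eq_zero hε hx, hε.le]
  · have h0 : 0 ≤ tent μ ε x := le_max_left _ _
    have h1 : tent μ ε x ≤ 1 :=
      max_le zero_le_one (by linarith [div_nonneg (abs_nonneg (x - μ)) hε.le])
    rw [abs_mul, abs_of_nonneg h0]
    nlinarith [abs_nonneg (x - μ)]

theorem tent_mul_tent_eq_zero {ν : ℝ} (hε : 0 < ε) (h : 2 * ε ≤ |μ - ν|) (x : ℝ) :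
    tent μ ε x * tent ν ε x = 0 := by
  by_contra hne
  have hμ : |x - μ| < ε := lt_of_not_ge fun hx => hne (by rw [tent_eq_zero hε hx, zero_mul])
  have hν : |x - ν| < ε := lt_of_not_ge fun hx => hne (by rw [tent_eq_zero hε hx, mul_zero])
  have := abs_sub_le μ x ν
  rw [abs_sub_comm] at hμ
  linarith

end tent

section

variable {E : Type*} [NormedAddCommGroup E] [InnerProductSpace ℂ E]

theorem observableVar_le_norm_sq (T : E →L[ℂ] E) {φ : E} (hφ : ‖φ‖ = 1) :
    observableVar T φ ≤ ‖T‖ ^ 2 := by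
  have hTTφ : ‖T (T φ)‖ ≤ ‖T‖ ^ 2 :=
    calc ‖T (T φ)‖ ≤ ‖T‖ * ‖T φ‖ := T.le_opNorm _
      _ ≤ ‖T‖ * ‖T‖ := by gcongr; simpa [hφ] using T.le_opNorm φ
      _ = ‖T‖ ^ 2 := (sq _).symm
  calc observableVar T φ ≤ (⟪T (T φ), φ⟫_ℂ).re := by
        unfold observableVar; nlinarith [sq_nonneg (⟪T φ, φ⟫_ℂ).re]
    _ ≤ ‖⟪T (T φ), φ⟫_ℂ‖ := Complex.re_le_norm _
    _ ≤ ‖T (T φ)‖ * ‖φ‖ := norm_inner_le_norm _ _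
    _ ≤ ‖T‖ ^ 2 := by rw [hφ, mul_one]; exact hTTφ

theorem maxDev_nonneg (T : E →L[ℂ] E) : 0 ≤ maxDev T :=
  Real.iSup_nonneg fun _ => Real.sqrt_nonneg _

theorem sqrt_observableVar_le_maxDev (T : E →L[ℂ] E) {φ : E} (hφ : ‖φ‖ = 1) :
    √(observableVar T φ) ≤ maxDev T := by
  refine le_ciSup (f := fun ψ : {x : E // ‖x‖ = 1} => √(observableVar T ψ)) ⟨‖T‖, ?_⟩ ⟨φ, hφ⟩
  rintro _ ⟨ψ, rfl⟩
  exact (Real.sqrt_le_left (norm_nonneg T)).mpr (observableVar_le_norm_sq T ψ.2)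

theorem maxDev_le {T : E →L[ℂ] E} {r : ℝ} (hr : 0 ≤ r)
    (h : ∀ φ : E, ‖φ‖ = 1 → observableVar T φ ≤ r ^ 2) : maxDev T ≤ r :=
  Real.iSup_le (fun φ => (Real.sqrt_le_left hr).mpr (h φ φ.2)) hr

end

section

variable {E : Type*} [NormedAddCommGroup E] [InnerProductSpace ℂ E] [CompleteSpace E]

theorem inner_cfc_apply_cfc_apply_eq_zero {T : E →L[ℂ] E} {f g : ℝ → ℝ}
    (hf : ContinuousOn f (spectrum ℝ T)) (hg : ContinuousOn g (spectrum ℝ T))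
    (hfg : ∀ x ∈ spectrum ℝ T, f x * g x = 0) (x y : E) :
    ⟪cfc f T x, cfc g T y⟫_ℂ = 0 := by
  have hfg0 : cfc f T * cfc g T = 0 := by
    rw [← cfc_mul f g T, cfc_congr (g := 0) hfg, cfc_zero]
  calc ⟪cfc f T x, cfc g T y⟫_ℂ = ⟪x, (cfc f T * cfc g T) y⟫_ℂ :=
        (cfc_predicate f T).isSymmetric _ _
    _ = 0 := by rw [hfg0]; simp

end

namespace IsSelfAdjoint

variable {E : Type*} [NormedAddCommGroup E] [InnerProductSpace ℂ E] [CompleteSpace E]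
  {T : E →L[ℂ] E}

theorem observableVar_eq (hT : IsSelfAdjoint T) (c : ℝ) {φ : E} (hφ : ‖φ‖ = 1) :
    observableVar T φ = ‖T φ - (c : ℂ) • φ‖ ^ 2 - ((⟪T φ, φ⟫_ℂ).re - c) ^ 2 := by
  have hT2 : (⟪T (T φ), φ⟫_ℂ).re = ‖T φ‖ ^ 2 := by
    rw [show ⟪T (T φ), φ⟫_ℂ = ⟪T φ, T φ⟫_ℂ from hT.isSymmetric _ _]
    exact inner_self_eq_norm_sq (𝕜 := ℂ) _
  rw [observableVar, hT2, @norm_sub_sq ℂ, inner_smul_right]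
  simp [norm_smul, hφ]
  ring

theorem maxDev_le_of_spectrum (hT : IsSelfAdjoint T) {c r : ℝ} (hr : 0 ≤ r)
    (hσ : ∀ x ∈ spectrum ℝ T, |x - c| ≤ r) : maxDev T ≤ r := by
  have hTc : ‖T - algebraMap ℝ (E →L[ℂ] E) c‖ ≤ r := by
    rw [← cfc_id' ℝ T, ← cfc_const c T, ← cfc_sub _ _ T]
    exact norm_cfc_le hr hσ
  refine maxDev_le hr fun φ hφ => ?_
  have hTφ : ‖T φ - (c : ℂ) • φ‖ ≤ r := by
    simpa [hφ, algebraMap_smul] using (T - algebraMap ℝ (E →L[ℂ] E) c).le_of_opNorm_le hTc φ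
  rw [hT.observableVar_eq c hφ]
  nlinarith [sq_nonneg ((⟪T φ, φ⟫_ℂ).re - c), norm_nonneg (T φ - (c : ℂ) • φ)]

theorem sq_norm_sub_le_observableVar (hT : IsSelfAdjoint T) (c : ℝ) {χ z : E} (hχ : ‖χ‖ = 1)
    (hzχ : ⟪z, χ⟫_ℂ = 0) :
    ‖z‖ ^ 2 - 2 * ‖z‖ * ‖T χ - (c : ℂ) • χ - z‖ ≤ observableVar T χ := by
  set e := T χ - (c : ℂ) • χ - z
  have hmean : |(⟪T χ, χ⟫_ℂ).re - c| ≤ ‖e‖ := by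
    have : (⟪T χ, χ⟫_ℂ).re - c = (⟪e, χ⟫_ℂ).re := by
      simp [e, hzχ, inner_self_eq_norm_sq_to_K, hχ]
    rw [this]
    calc |(⟪e, χ⟫_ℂ).re| ≤ ‖⟪e, χ⟫_ℂ‖ := Complex.abs_re_le_norm _
      _ ≤ ‖e‖ := by simpa [hχ] using norm_inner_le_norm (𝕜 := ℂ) e χ
  have hcross : -(‖z‖ * ‖e‖) ≤ (⟪z, e⟫_ℂ).re :=
    neg_le_of_abs_le <| (Complex.abs_re_le_norm _).trans (norm_inner_le_norm z e)
  have hdev : ‖T χ - (c : ℂ) • χ‖ ^ 2 = ‖z‖ ^ 2 + 2 * (⟪z, e⟫_ℂ).re + ‖e‖ ^ 2 := by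
    rw [show T χ - (c : ℂ) • χ = z + e by simp [e], @norm_add_sq ℂ]; rfl
  rw [hT.observableVar_eq c hχ, hdev]
  nlinarith [sq_abs ((⟪T χ, χ⟫_ℂ).re - c), abs_nonneg ((⟪T χ, χ⟫_ℂ).re - c)]

theorem exists_sq_half_sub_le_observableVar (hT : IsSelfAdjoint T) {u w : E} (hu : ‖u‖ = 1)
    (hw : ‖w‖ = 1) (huw : ⟪u, w⟫_ℂ = 0) {a b δ : ℝ} (hTu : ‖T u - (a : ℂ) • u‖ ≤ δ)
    (hTw : ‖T w - (b : ℂ) • w‖ ≤ δ) :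
    ∃ χ : E, ‖χ‖ = 1 ∧ ((a - b) / 2) ^ 2 - 2 * |a - b| * δ ≤ observableVar T χ := by
  have hwu : ⟪w, u⟫_ℂ = 0 := inner_eq_zero_symm.mp huw
  have hs : (1 : ℝ) ≤ √2 := Real.one_le_sqrt.mpr one_le_two
  have hnorm : ∀ v : E, ‖v‖ ^ 2 = 2 → ‖((√2 : ℝ) : ℂ)⁻¹ • v‖ = 1 := fun v hv => by
    rw [norm_smul, norm_inv, Complex.norm_real, Real.norm_of_nonneg (Real.sqrt_nonneg 2),
      ← Real.sqrt_sq (norm_nonneg v), hv, inv_mul_cancel₀ (by positivity)]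
  have hadd : ‖u + w‖ ^ 2 = 2 := by
    rw [sq, norm_add_sq_eq_norm_sq_add_norm_sq_of_inner_eq_zero u w huw, hu, hw]; norm_num
  have hsub : ‖u - w‖ ^ 2 = 2 := by
    rw [sq, sub_eq_add_neg, norm_add_sq_eq_norm_sq_add_norm_sq_of_inner_eq_zero (𝕜 := ℂ) u (-w)
      (by rw [inner_neg_right, huw, neg_zero]), norm_neg, hu, hw]; norm_num
  -- For exact eigenvectors, `(T - (a + b) / 2) χ = z` with `z ⟂ χ` and `‖z‖ = |a - b| / 2`.
  set χ := ((√2 : ℝ) : ℂ)⁻¹ • (u + w)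
  set z := (((a - b) / 2 : ℝ) : ℂ) • ((√2 : ℝ) : ℂ)⁻¹ • (u - w)
  have hχ : ‖χ‖ = 1 := hnorm _ hadd
  have hz : ‖z‖ = |a - b| / 2 := by
    rw [norm_smul, hnorm _ hsub, mul_one, Complex.norm_real, Real.norm_eq_abs, abs_div,
      abs_two]
  have hzχ : ⟪z, χ⟫_ℂ = 0 := by
    simp only [z, χ, inner_smul_left, inner_smul_right, inner_sub_left, inner_add_right, huw,
      hwu, inner_self_eq_norm_sq_to_K, hu, hw]
    ring
  have herr : ‖T χ - (((a + b) / 2 : ℝ) : ℂ) • χ - z‖ ≤ 2 * δ := by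
    have : T χ - (((a + b) / 2 : ℝ) : ℂ) • χ - z
        = ((√2 : ℝ) : ℂ)⁻¹ • ((T u - (a : ℂ) • u) + (T w - (b : ℂ) • w)) := by
      simp only [χ, z, map_smul, map_add]
      push_cast
      module
    rw [this, norm_smul, norm_inv, Complex.norm_real, Real.norm_of_nonneg (Real.sqrt_nonneg 2)]
    calc (√2)⁻¹ * ‖T u - (a : ℂ) • u + (T w - (b : ℂ) • w)‖
        ≤ 1 * (δ + δ) := by
          gcongr
          · exact inv_le_one_of_one_le₀ hs
          · exact (norm_add_le _ _).trans (add_le_add hTu hTw)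
      _ = 2 * δ := by ring
  refine ⟨χ, hχ, le_trans ?_ (hT.sq_norm_sub_le_observableVar ((a + b) / 2) hχ hzχ)⟩
  rw [hz, ← sq_abs ((a - b) / 2), abs_div, abs_two]
  nlinarith [abs_nonneg (a - b)]

theorem exists_norm_sub_smul_le_of_mem_spectrum (hT : IsSelfAdjoint T) {μ ε : ℝ}
    (hμ : μ ∈ spectrum ℝ T) (hε : 0 < ε) :
    ∃ u ∈ Set.range (cfc (tent μ ε) T : E →L[ℂ] E), ‖u‖ = 1 ∧ ‖T u - (μ : ℂ) • u‖ ≤ 2 * ε := by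
  set P := cfc (tent μ ε) T
  set A := T - algebraMap ℝ (E →L[ℂ] E) μ
  have hP : 1 ≤ ‖P‖ := by simpa using norm_apply_le_norm_cfc (tent μ ε) T hμ
  have hAP : ‖A * P‖ ≤ ε := by
    have : A * P = cfc (fun x => (x - μ) * tent μ ε x) T := by
      rw [cfc_mul _ _ T, cfc_sub _ _ T, cfc_id' ℝ T, cfc_const μ T]
    rw [this]
    exact norm_cfc_le hε.le fun x _ => abs_sub_mul_tent_le hε x
  obtain ⟨u, hu, hu1, hAu⟩ :=
    A.exists_mem_range_norm_eq_one_norm_apply_le P (norm_pos_iff.mp (one_pos.trans_le hP))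
  refine ⟨u, hu, hu1, ?_⟩
  calc ‖T u - (μ : ℂ) • u‖ = ‖A u‖ := by simp [A]
    _ ≤ 2 * ‖A * P‖ / ‖P‖ := hAu
    _ ≤ 2 * ε / 1 := by gcongr
    _ = 2 * ε := div_one _

theorem abs_sub_le_two_mul_maxDev (hT : IsSelfAdjoint T) {a b : ℝ} (ha : a ∈ spectrum ℝ T)
    (hb : b ∈ spectrum ℝ T) : |a - b| ≤ 2 * maxDev T := by
  rcases (abs_nonneg (a - b)).eq_or_lt with hab | hab
  · rw [← hab]; exact mul_nonneg zero_le_two (maxDev_nonneg T)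
  have hvar : ∀ ε : ℝ, 0 < ε → 4 * ε ≤ |a - b| →
      ((a - b) / 2) ^ 2 - 4 * |a - b| * ε ≤ maxDev T ^ 2 := by
    intro ε hε hsep
    obtain ⟨u, ⟨x, rfl⟩, hu, hTu⟩ := hT.exists_norm_sub_smul_le_of_mem_spectrum ha hε
    obtain ⟨w, ⟨y, rfl⟩, hw, hTw⟩ := hT.exists_norm_sub_smul_le_of_mem_spectrum hb hε
    have huw : ⟪cfc (tent a ε) T x, cfc (tent b ε) T y⟫_ℂ = 0 :=
      inner_cfc_apply_cfc_apply_eq_zero (by fun_prop) (by fun_prop)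
        (fun t _ => tent_mul_tent_eq_zero hε (by linarith) t) x y
    obtain ⟨χ, hχ, hχvar⟩ := hT.exists_sq_half_sub_le_observableVar hu hw huw hTu hTw
    have := (Real.sqrt_le_left (maxDev_nonneg T)).mp (sqrt_observableVar_le_maxDev T hχ)
    linarith
  have hlim : Tendsto (fun ε => ((a - b) / 2) ^ 2 - 4 * |a - b| * ε) (𝓝[>] 0)
      (𝓝 (((a - b) / 2) ^ 2)) := by
    have : Continuous fun ε : ℝ => ((a - b) / 2) ^ 2 - 4 * |a - b| * ε := by fun_prop
    simpa using this.continuousWithinAt (s := Set.Ioi 0) (x := 0) |>.tendsto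
  have hsq := le_of_tendsto hlim <| by
    filter_upwards [Ioc_mem_nhdsGT (show (0 : ℝ) < |a - b| / 4 by positivity)]
      with ε ⟨hε, hsep⟩
    exact hvar ε hε (by linarith)
  have := abs_le_of_sq_le_sq hsq (maxDev_nonneg T)
  rw [abs_div, abs_two] at this
  linarith

end IsSelfAdjoint

theorem maxDev_eq_half_diam_spectrum (T : H →L[ℂ] H) (hT : IsSelfAdjoint T) :
    maxDev T = Metric.diam (spectrum ℂ T) / 2 := by
  rw [hT.diam_spectrum_complex]
  have hσ : Bornology.IsBounded (spectrum ℝ T) := (spectrum.isCompact T).isBounded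
  refine le_antisymm ?_ ?_
  · exact hT.maxDev_le_of_spectrum (by positivity) fun x hx =>
      Real.abs_sub_midpoint_le_half_diam hσ hx
  · have : Metric.diam (spectrum ℝ T) ≤ 2 * maxDev T :=
      Metric.diam_le_of_forall_dist_le (mul_nonneg zero_le_two (maxDev_nonneg T))
        fun a ha b hb => hT.abs_sub_le_two_mul_maxDev ha hb
    linarith
end

section
/- Let P be a nontrivial projection (P ≠ 0, P ≠ I) on a complex Hilbert space H, and suppose P = μT + (1−μ)S + λI where 0 < μ < 1, T and S are bounded positive self-adjoint operators with 0 ≤ T ≤ I and 0 ≤ S ≤ I, 0 ∈ σ(T), 0 ∈ σ(S), and λ ∈ ℝ. Then λ = 0. -/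
/-!
Write `P = A + λ` with `A = μ T + (1 - μ) S`, so that `0 ≤ A ≤ 1`. A nonzero vector in the kernel
of `P` is an eigenvector of `A` with eigenvalue `-λ`, and a nonzero vector in the range of `P` is
one with eigenvalue `1 - λ`. Eigenvalues of an operator between `0` and `1` lie in `[0, 1]`, so
`-λ ≥ 0` and `1 - λ ≤ 1`.
-/

section Idempotent

variable {R M : Type*} [Ring R] [TopologicalSpace M] [AddCommGroup M] [Module R M]
  {P : M →L[R] M}

theorem IsIdempotentElem.exists_ne_zero_apply_eq_zero (hP : IsIdempotentElem P)
    (hP1 : P ≠ 1) : ∃ x, x ≠ 0 ∧ P x = 0 := by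
  obtain ⟨y, hy⟩ := DFunLike.ne_iff.1 hP1
  refine ⟨y - P y, sub_ne_zero.2 (Ne.symm hy), ?_⟩
  rw [map_sub, ← mul_apply_eq_comp, hP.eq, sub_self]

theorem IsIdempotentElem.exists_ne_zero_apply_eq_self (hP : IsIdempotentElem P)
    (hP0 : P ≠ 0) : ∃ x, x ≠ 0 ∧ P x = x := by
  obtain ⟨y, hy⟩ := DFunLike.ne_iff.1 hP0
  exact ⟨P y, hy, by rw [← mul_apply_eq_comp, hP.eq]⟩

end Idempotent

namespace ContinuousLinearMap

section Positive

variable {𝕜 E : Type*} [RCLike 𝕜] [NormedAddCommGroup E] [InnerProductSpace 𝕜 E]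

theorem IsPositive.nonneg_of_apply_eq_smul {T : E →L[𝕜] E} {c : ℝ} {x : E} (hT : T.IsPositive)
    (hx : x ≠ 0) (hTx : T x = (c : 𝕜) • x) : 0 ≤ c := by
  have h := hT.re_inner_nonneg_left x
  rw [hTx, inner_smul_left, RCLike.conj_ofReal, RCLike.re_ofReal_mul, inner_self_eq_norm_sq] at h
  exact nonneg_of_mul_nonneg_left h (by positivity)

theorem mem_Icc_of_apply_eq_smul {T : E →L[𝕜] E} {c : ℝ} {x : E} (hT : T.IsPositive)
    (hT1 : (1 - T).IsPositive) (hx : x ≠ 0) (hTx : T x = (c : 𝕜) • x) : c ∈ Set.Icc 0 1 := by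
  refine ⟨hT.nonneg_of_apply_eq_smul hx hTx, sub_nonneg.1 (hT1.nonneg_of_apply_eq_smul hx ?_)⟩
  rw [sub_apply, one_apply_eq_self, hTx, RCLike.ofReal_sub, RCLike.ofReal_one, sub_smul, one_smul]

theorem _root_.IsIdempotentElem.eq_zero_of_eq_add_smul_one {P A : E →L[𝕜] E} {lam : ℝ}
    (hP : IsIdempotentElem P) (hP0 : P ≠ 0) (hP1 : P ≠ 1) (hA : A.IsPositive)
    (hA1 : (1 - A).IsPositive) (heq : P = A + (lam : 𝕜) • 1) : lam = 0 := by
  have hAP (v : E) : A v = P v - (lam : 𝕜) • v := by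
    rw [heq, add_apply, smul_apply, one_apply_eq_self, add_sub_cancel_right]
  obtain ⟨x, hx0, hPx⟩ := hP.exists_ne_zero_apply_eq_zero hP1
  obtain ⟨y, hy0, hPy⟩ := hP.exists_ne_zero_apply_eq_self hP0
  have hAx : A x = ((-lam : ℝ) : 𝕜) • x := by
    rw [hAP, hPx, zero_sub, ← neg_smul, RCLike.ofReal_neg]
  have hAy : A y = ((1 - lam : ℝ) : 𝕜) • y := by
    rw [hAP, hPy, RCLike.ofReal_sub, RCLike.ofReal_one, sub_smul, one_smul]
  have hlam_nonpos : 0 ≤ -lam := (mem_Icc_of_apply_eq_smul hA hA1 hx0 hAx).1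
  have hlam_nonneg : 1 - lam ≤ 1 := (mem_Icc_of_apply_eq_smul hA hA1 hy0 hAy).2
  linarith

end Positive

theorem IsPositive.real_smul_add_smul {E : Type*} [NormedAddCommGroup E] [InnerProductSpace ℂ E]
    {T S : E →L[ℂ] E} (hT : T.IsPositive) (hS : S.IsPositive) {a b : ℝ} (ha : 0 ≤ a)
    (hb : 0 ≤ b) : (a • T + b • S).IsPositive := by
  rw [← Complex.coe_smul, ← Complex.coe_smul]
  exact (hT.smul_of_nonneg (by exact_mod_cast ha)).add (hS.smul_of_nonneg (by exact_mod_cast hb))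

end ContinuousLinearMap

variable {H : Type*} [NormedAddCommGroup H] [InnerProductSpace ℂ H] [CompleteSpace H]

theorem lambda_eq_zero_of_projection_convex_combination_general
    (P T S : H →L[ℂ] H) (hP2 : IsIdempotentElem P)
    (hP0 : P ≠ 0) (hP1 : P ≠ 1)
    (μ lam : ℝ) (hμ0 : 0 < μ) (hμ1 : μ < 1)
    (hT : T.IsPositive) (hT1 : ((1 : H →L[ℂ] H) - T).IsPositive)
    (hS : S.IsPositive) (hS1 : ((1 : H →L[ℂ] H) - S).IsPositive)
    (heq : P = μ • T + (1 - μ) • S + lam • (1 : H →L[ℂ] H)) :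
    lam = 0 := by
  have hν : 0 ≤ 1 - μ := sub_nonneg.2 hμ1.le
  refine hP2.eq_zero_of_eq_add_smul_one hP0 hP1 (hT.real_smul_add_smul hS hμ0.le hν) ?_ ?_
  · convert hT1.real_smul_add_smul hS1 hμ0.le hν using 1
    module
  · rwa [← RCLike.real_smul_eq_coe_smul]

theorem lambda_eq_zero_of_projection_convex_combination
    (P T S : H →L[ℂ] H) (hP : IsSelfAdjoint P) (hP2 : IsIdempotentElem P)
    (hP0 : P ≠ 0) (hP1 : P ≠ 1)
    (μ lam : ℝ) (hμ0 : 0 < μ) (hμ1 : μ < 1)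
    (hT : T.IsPositive) (hT1 : ((1 : H →L[ℂ] H) - T).IsPositive)
    (hS : S.IsPositive) (hS1 : ((1 : H →L[ℂ] H) - S).IsPositive)
    (hT0 : (0 : ℂ) ∈ spectrum ℂ T) (hS0 : (0 : ℂ) ∈ spectrum ℂ S)
    (heq : P = μ • T + (1 - μ) • S + lam • (1 : H →L[ℂ] H)) :
    lam = 0 :=
  lambda_eq_zero_of_projection_convex_combination_general P T S hP2 hP0 hP1 μ lam hμ0 hμ1 hT hT1 hS
    hS1 heq
end

section
/- Let B be a bounded self-adjoint operator on a complex Hilbert space with 0 ≤ B ≤ I, and suppose B is not a projection. Then there exist B₁, B₂ with 0 ≤ B₁, B₂ ≤ I, B = (B₁ + B₂)/2, and B ≠ B₁, B ≠ B₂. -/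
/-!
If `0 ≤ B ≤ 1` then `B - B² = (1 - B) B (1 - B) + B (1 - B) B ≥ 0`, so `B₂ = B²` and
`B₁ = 2B - B²` both lie in the operator interval `[0, 1]` (note `1 - B₁ = (1 - B)²`), and they
average to `B`. Both differ from `B` exactly because `B² ≠ B`.
-/

section StarOrderedRing

variable {R : Type*} [Ring R] [PartialOrder R] [StarRing R] [StarOrderedRing R] {a : R}

theorem mul_self_le_self_of_nonneg_of_le_one (h0 : 0 ≤ a) (h1 : a ≤ 1) : a * a ≤ a := by
  have ha : star a = a := (IsSelfAdjoint.of_nonneg h0).star_eq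
  have h1' : star (1 - a) = 1 - a := (IsSelfAdjoint.of_nonneg (sub_nonneg.2 h1)).star_eq
  have hdecomp : a - a * a = star (1 - a) * a * (1 - a) + star a * (1 - a) * a := by
    rw [ha, h1']
    noncomm_ring
  rw [← sub_nonneg, hdecomp]
  exact add_nonneg (star_left_conjugate_nonneg h0 _)
    (star_left_conjugate_nonneg (sub_nonneg.2 h1) _)

theorem mul_self_mem_Icc (h0 : 0 ≤ a) (h1 : a ≤ 1) : a * a ∈ Set.Icc 0 1 :=
  ⟨(IsSelfAdjoint.of_nonneg h0).mul_self_nonneg,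
    (mul_self_le_self_of_nonneg_of_le_one h0 h1).trans h1⟩

theorem two_mul_sub_mul_self_mem_Icc (h0 : 0 ≤ a) (h1 : a ≤ 1) :
    2 * a - a * a ∈ Set.Icc 0 1 := by
  constructor
  · calc (0 : R) ≤ a + (a - a * a) :=
          add_nonneg h0 (sub_nonneg.2 (mul_self_le_self_of_nonneg_of_le_one h0 h1))
      _ = 2 * a - a * a := by noncomm_ring
  · have hsq : 1 - (2 * a - a * a) = (1 - a) * (1 - a) := by noncomm_ring
    rw [← sub_nonneg, hsq]
    exact (IsSelfAdjoint.of_nonneg (sub_nonneg.2 h1)).mul_self_nonneg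

end StarOrderedRing

variable {H : Type*} [NormedAddCommGroup H] [InnerProductSpace ℂ H] [CompleteSpace H]

theorem exists_nontrivial_average_of_not_projection (B : H →L[ℂ] H)
    (hB : B.IsPositive) (hB1 : ((1 : H →L[ℂ] H) - B).IsPositive)
    (hBnp : ¬ IsIdempotentElem B) :
    ∃ B₁ B₂ : H →L[ℂ] H, B₁.IsPositive ∧ ((1 : H →L[ℂ] H) - B₁).IsPositive ∧
      B₂.IsPositive ∧ ((1 : H →L[ℂ] H) - B₂).IsPositive ∧
      B = (2⁻¹ : ℝ) • (B₁ + B₂) ∧ B ≠ B₁ ∧ B ≠ B₂ := by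
  simp only [← ContinuousLinearMap.nonneg_iff_isPositive, sub_nonneg] at hB hB1 ⊢
  obtain ⟨hB₁0, hB₁1⟩ := two_mul_sub_mul_self_mem_Icc hB hB1
  obtain ⟨hB₂0, hB₂1⟩ := mul_self_mem_Icc hB hB1
  refine ⟨2 * B - B * B, B * B, hB₁0, hB₁1, hB₂0, hB₂1, ?_, ?_, fun h ↦ hBnp h.symm⟩
  · rw [sub_add_cancel, two_mul, ← two_smul ℝ B, smul_smul]
    norm_num
  · intro h
    rw [eq_sub_iff_add_eq, two_mul, add_right_inj] at h
    exact hBnp h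
end

section
/- Let P and Q be projections on a complex Hilbert space H with P nontrivial, and suppose inf_{μ∈ℝ} ‖P − Q − μI‖ < 1/2. Then ‖P − Q‖ < 1, and consequently P and Q are unitarily equivalent. -/
/-!
Testing `P - Q - μ` against unit vectors in the range and in the kernel of `P` gives
`|μ| ≤ ‖P - Q - μ‖`, hence `‖P - Q‖ ≤ 2 ‖P - Q - μ‖ < 1`.

For projections with `‖p - q‖ < 1`, the element `v = q p + (1 - q)(1 - p)` satisfies `v p = q v`
and `v⋆ v = v v⋆ = 1 - (p - q)²`, which is invertible and commutes with `p`. So `v` is invertible,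
`|v|` commutes with `p`, and the unitary `v |v|⁻¹` from the polar decomposition of `v` still
conjugates `p` to `q`.
-/

open scoped InnerProductSpace Ring

theorem isUnit_of_isUnit_mul_of_isUnit_mul {M : Type*} [Monoid M] {a b c : M}
    (hab : IsUnit (a * b)) (hca : IsUnit (c * a)) : IsUnit a := by
  obtain ⟨x, hx⟩ := hab.exists_right_inv
  obtain ⟨y, hy⟩ := hca.exists_left_inv
  exact isUnit_iff_exists_and_exists.2
    ⟨⟨b * x, by rw [← mul_assoc, hx]⟩, ⟨y * c, by rw [mul_assoc, hy]⟩⟩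

theorem Commute.ringInverse_right {M₀ : Type*} [MonoidWithZero M₀] {a b : M₀} (h : Commute a b) :
    Commute a b⁻¹ʳ := by
  by_cases hb : IsUnit b
  · rw [← hb.unit_spec, Ring.inverse_unit]
    exact (hb.unit_spec ▸ h).units_inv_right
  · rw [Ring.inverse_non_unit b hb]
    exact Commute.zero_right a

/-- For projections, maps the range of `p` into that of `q` and the kernel of `p` into that of
`q`. -/
def intertwiner {R : Type*} [Ring R] (p q : R) : R := q * p + (1 - q) * (1 - p)

namespace IsIdempotentElem

variable {R : Type*} [Ring R] {p q : R}

theorem intertwiner_mul (hp : IsIdempotentElem p) (hq : IsIdempotentElem q) :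
    intertwiner p q * p = q * intertwiner p q := by
  simp only [intertwiner, mul_sub, sub_mul, add_mul, mul_add, mul_one, one_mul, mul_assoc,
    hp.eq, hq.eq, hq.mul_self_mul]
  abel

theorem intertwiner_mul_intertwiner (hp : IsIdempotentElem p) (hq : IsIdempotentElem q) :
    intertwiner q p * intertwiner p q = 1 - (p - q) ^ 2 := by
  simp only [intertwiner, sq, mul_sub, sub_mul, add_mul, mul_add, mul_one, one_mul, mul_assoc,
    hp.eq, hq.eq, hq.mul_self_mul]
  abel

theorem commute_one_sub_sub_sq (hp : IsIdempotentElem p) (hq : IsIdempotentElem q) :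
    Commute p (1 - (p - q) ^ 2) := by
  simp only [Commute, SemiconjBy, sq, mul_sub, sub_mul, mul_one, one_mul, mul_assoc, hp.eq, hq.eq,
    hp.mul_self_mul]
  abel

end IsIdempotentElem

theorem IsStarProjection.star_intertwiner {R : Type*} [Ring R] [StarRing R] {p q : R}
    (hp : IsStarProjection p) (hq : IsStarProjection q) :
    star (intertwiner p q) = intertwiner q p := by
  simp [intertwiner, hp.isSelfAdjoint.star_eq, hq.isSelfAdjoint.star_eq]

theorem isUnit_one_sub_sq_of_norm_lt_one {R : Type*} [NormedRing R] [HasSummableGeomSeries R]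
    {a : R} (h : ‖a‖ < 1) : IsUnit (1 - a ^ 2) := by
  refine (Units.oneSub _ ?_).isUnit
  calc ‖a ^ 2‖ ≤ ‖a‖ ^ 2 := norm_pow_le' a two_pos
    _ < 1 := pow_lt_one₀ (norm_nonneg a) h two_ne_zero

section CStarAlgebra

variable {A : Type*} [CStarAlgebra A] [PartialOrder A] [StarOrderedRing A]

theorem IsUnit.cfcAbs {v : A} (hv : IsUnit v) : IsUnit (CFC.abs v) :=
  (CFC.isUnit_sqrt_iff _).2 (hv.star.mul hv)

theorem IsUnit.mul_ringInverse_abs_mem_unitary {v : A} (hv : IsUnit v) :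
    v * (CFC.abs v)⁻¹ʳ ∈ unitary A := by
  have habs := hv.cfcAbs
  refine (hv.mul habs.ringInverse).mem_unitary_of_star_mul_self ?_
  rw [star_mul, (CFC.abs_nonneg v).isSelfAdjoint.ringInverse.star_eq]
  calc (CFC.abs v)⁻¹ʳ * star v * (v * (CFC.abs v)⁻¹ʳ)
      = (CFC.abs v)⁻¹ʳ * (CFC.abs v * CFC.abs v) * (CFC.abs v)⁻¹ʳ := by
        rw [CFC.abs_mul_abs]; noncomm_ring
    _ = 1 := by
        rw [← mul_assoc, Ring.inverse_mul_cancel _ habs, one_mul, Ring.mul_inverse_cancel _ habs]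

theorem mul_ringInverse_abs_mul_eq {v p q : A} (hpq : v * p = q * v)
    (hp : Commute p (star v * v)) : v * (CFC.abs v)⁻¹ʳ * p = q * (v * (CFC.abs v)⁻¹ʳ) := by
  have : Commute p (CFC.abs v)⁻¹ʳ := (hp.symm.cfcₙ_nnreal _).symm.ringInverse_right
  rw [mul_assoc, ← this.eq, ← mul_assoc, hpq, mul_assoc]

theorem exists_unitary_conj_eq_of_isUnit {v p q : A} (hv : IsUnit v) (hpq : v * p = q * v)
    (hp : Commute p (star v * v)) : ∃ u ∈ unitary A, q = u * p * star u := by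
  refine ⟨_, hv.mul_ringInverse_abs_mem_unitary, ?_⟩
  rw [mul_ringInverse_abs_mul_eq hpq hp, mul_assoc,
    Unitary.mul_star_self_of_mem hv.mul_ringInverse_abs_mem_unitary, mul_one]

theorem IsStarProjection.exists_unitary_conj_eq_of_norm_sub_lt_one {p q : A}
    (hp : IsStarProjection p) (hq : IsStarProjection q) (h : ‖p - q‖ < 1) :
    ∃ u ∈ unitary A, q = u * p * star u := by
  have hunit := isUnit_one_sub_sq_of_norm_lt_one h
  have hvv : star (intertwiner p q) * intertwiner p q = 1 - (p - q) ^ 2 := by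
    rw [hp.star_intertwiner hq, hp.isIdempotentElem.intertwiner_mul_intertwiner hq.isIdempotentElem]
  have hvv' : intertwiner p q * star (intertwiner p q) = 1 - (p - q) ^ 2 := by
    rw [hp.star_intertwiner hq, hq.isIdempotentElem.intertwiner_mul_intertwiner hp.isIdempotentElem,
      ← neg_sub p q, neg_sq]
  refine exists_unitary_conj_eq_of_isUnit (v := intertwiner p q) ?_ ?_ ?_
  · exact isUnit_of_isUnit_mul_of_isUnit_mul (hvv' ▸ hunit) (hvv ▸ hunit)
  · exact hp.isIdempotentElem.intertwiner_mul hq.isIdempotentElem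
  · exact hvv ▸ hp.isIdempotentElem.commute_one_sub_sub_sq hq.isIdempotentElem

end CStarAlgebra

theorem ContinuousLinearMap.abs_re_inner_apply_self_le {𝕜 E : Type*} [RCLike 𝕜]
    [NormedAddCommGroup E] [InnerProductSpace 𝕜 E] (T : E →L[𝕜] E) (x : E) :
    |RCLike.re ⟪T x, x⟫_𝕜| ≤ ‖T‖ * ‖x‖ ^ 2 :=
  calc |RCLike.re ⟪T x, x⟫_𝕜| ≤ ‖⟪T x, x⟫_𝕜‖ := RCLike.abs_re_le_norm _
    _ ≤ ‖T x‖ * ‖x‖ := norm_inner_le_norm _ _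
    _ ≤ ‖T‖ * ‖x‖ * ‖x‖ := by gcongr; exact T.le_opNorm x
    _ = ‖T‖ * ‖x‖ ^ 2 := by ring

theorem IsIdempotentElem.exists_norm_eq_one_apply_eq_self {𝕜 E : Type*} [RCLike 𝕜]
    [NormedAddCommGroup E] [NormedSpace 𝕜 E] {P : E →L[𝕜] E} (hP : IsIdempotentElem P)
    (hP0 : P ≠ 0) :
    ∃ y, ‖y‖ = 1 ∧ P y = y := by
  obtain ⟨x, hx⟩ : ∃ x, P x ≠ 0 := by
    by_contra! h
    exact hP0 (ContinuousLinearMap.ext h)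
  refine ⟨(‖P x‖⁻¹ : 𝕜) • P x, norm_smul_inv_norm hx, ?_⟩
  rw [map_smul, ← P.comp_apply, ← P.mul_def, hP.eq]

variable {H : Type*} [NormedAddCommGroup H] [InnerProductSpace ℂ H] [CompleteSpace H]

theorem IsStarProjection.abs_le_norm_sub_sub_smul_one {P Q : H →L[ℂ] H} (hP : IsStarProjection P)
    (hQ : IsStarProjection Q) (hP0 : P ≠ 0) (hP1 : P ≠ 1) (μ : ℝ) :
    |μ| ≤ ‖P - Q - μ • (1 : H →L[ℂ] H)‖ := by
  set D := P - Q - μ • (1 : H →L[ℂ] H)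
  have re_inner_sub_smul (A : H →L[ℂ] H) {x : H} (hx : ‖x‖ = 1) :
      RCLike.re ⟪(A - μ • (1 : H →L[ℂ] H)) x, x⟫_ℂ = RCLike.re ⟪A x, x⟫_ℂ - μ := by
    simp [hx]
  have bound {x : H} (hx : ‖x‖ = 1) : |RCLike.re ⟪D x, x⟫_ℂ| ≤ ‖D‖ := by
    simpa [hx] using D.abs_re_inner_apply_self_le x
  obtain ⟨y, hy1, hPy⟩ := hP.isIdempotentElem.exists_norm_eq_one_apply_eq_self hP0
  obtain ⟨z, hz1, hPz⟩ :=
    hP.isIdempotentElem.one_sub.exists_norm_eq_one_apply_eq_self (sub_ne_zero.2 hP1.symm)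
  have hy : -μ ≤ RCLike.re ⟪D y, y⟫_ℂ := by
    have hDy : D y = (1 - Q - μ • (1 : H →L[ℂ] H)) y := by simp [D, hPy]
    rw [hDy, re_inner_sub_smul _ hy1]
    linarith [((1 - Q).nonneg_iff_isPositive.1 hQ.one_sub.nonneg).re_inner_nonneg_left y]
  have hz : RCLike.re ⟪D z, z⟫_ℂ ≤ -μ := by
    have hDz : D z = (-Q - μ • (1 : H →L[ℂ] H)) z := by
      have : P z = 0 := by simpa [sub_eq_self] using hPz
      simp [D, this]
    rw [hDz, re_inner_sub_smul _ hz1, neg_apply, inner_neg_left, map_neg]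
    linarith [(Q.nonneg_iff_isPositive.1 hQ.nonneg).re_inner_nonneg_left z]
  obtain ⟨-, hyD⟩ := abs_le.1 (bound hy1)
  obtain ⟨hzD, -⟩ := abs_le.1 (bound hz1)
  exact abs_le.2 ⟨by linarith, by linarith⟩

theorem IsStarProjection.norm_sub_le_two_mul_norm_sub_sub_smul_one {P Q : H →L[ℂ] H}
    (hP : IsStarProjection P) (hQ : IsStarProjection Q) (hP0 : P ≠ 0) (hP1 : P ≠ 1) (μ : ℝ) :
    ‖P - Q‖ ≤ 2 * ‖P - Q - μ • (1 : H →L[ℂ] H)‖ := by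
  have hμ := hP.abs_le_norm_sub_sub_smul_one hQ hP0 hP1 μ
  calc ‖P - Q‖ = ‖(P - Q - μ • (1 : H →L[ℂ] H)) + μ • (1 : H →L[ℂ] H)‖ := by rw [sub_add_cancel]
    _ ≤ ‖P - Q - μ • (1 : H →L[ℂ] H)‖ + |μ| := by
      grw [norm_add_le, norm_smul, Real.norm_eq_abs, show ‖(1 : H →L[ℂ] H)‖ ≤ 1 from
        ContinuousLinearMap.norm_id_le, mul_one]
    _ ≤ 2 * ‖P - Q - μ • (1 : H →L[ℂ] H)‖ := by linarith

theorem projections_unitarily_equivalent_of_factor_dist_lt_half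
    (P Q : H →L[ℂ] H) (hP : IsSelfAdjoint P) (hP2 : IsIdempotentElem P)
    (hQ : IsSelfAdjoint Q) (hQ2 : IsIdempotentElem Q)
    (hP0 : P ≠ 0) (hP1 : P ≠ 1)
    (h : (⨅ μ : ℝ, ‖P - Q - μ • (1 : H →L[ℂ] H)‖) < 1 / 2) :
    ‖P - Q‖ < 1 ∧ ∃ U ∈ unitary (H →L[ℂ] H), Q = U * P * star U := by
  have hPproj : IsStarProjection P := ⟨hP2, hP⟩
  have hQproj : IsStarProjection Q := ⟨hQ2, hQ⟩
  obtain ⟨μ, hμ⟩ := exists_lt_of_ciInf_lt h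
  have hnorm : ‖P - Q‖ < 1 := by
    linarith [hPproj.norm_sub_le_two_mul_norm_sub_sub_smul_one hQproj hP0 hP1 μ]
  exact ⟨hnorm, hPproj.exists_unitary_conj_eq_of_norm_sub_lt_one hQproj hnorm⟩
end

section
/- Let P, Q, R be projections on a complex Hilbert space with P + Q = R + I. Then P and Q commute. -/
lemma aux_comm_of_idem {A : Type*} [Ring A] (p q : A) (hp : p*p = p) (hq : q*q = q)
    (he : (p+q-1)*(p+q-1) = p+q-1) : p*q = q*p := by
  linear_combination (norm := noncomm_ring) he*p - p*he + hp*q - q*hp + p*hq - hq*p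

variable {H : Type*} [NormedAddCommGroup H] [InnerProductSpace ℂ H] [CompleteSpace H]

theorem commute_of_sum_eq_projection_add_one
    (P Q R : H →L[ℂ] H) (hP : IsSelfAdjoint P) (hP2 : IsIdempotentElem P)
    (hQ : IsSelfAdjoint Q) (hQ2 : IsIdempotentElem Q)
    (hR : IsSelfAdjoint R) (hR2 : IsIdempotentElem R)
    (h : P + Q = R + 1) :
    P * Q = Q * P := by
  have hRdef : R = P + Q - 1 := by
    rw [eq_sub_iff_add_eq, ← h]
  have he : (P + Q - 1) * (P + Q - 1) = P + Q - 1 := by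
    rw [← hRdef]; exact hR2
  exact aux_comm_of_idem P Q hP2 hQ2 he
end

section
/- The extreme points of the closed unit ball of the real Banach space B_s(H) of bounded self-adjoint operators (with the operator norm) are exactly the self-adjoint unitaries, i.e., operators of the form 2P − I where P is a projection. -/
/-!
If `U = 2P - 1`, then `U² = 1` and `U` is an isometry. Since a Hilbert space is strictly convex,
a vector `Ux` of norm `‖x‖` is not a proper convex combination of two distinct vectors `Tx`, `Sx`
of norm at most `‖x‖`, so `U` is extreme even among all contractions.

Conversely, for a self-adjoint contraction `U` the operators `U ± ½(1 - U²)` are again self-adjoint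
contractions: by the functional calculus this reduces to `|t ± ½(1 - t²)| ≤ 1` for `|t| ≤ 1`.
Their midpoint is `U`, so extremality forces `U² = 1`, and then `P = ½(1 + U)` is a projection.
-/

theorem abs_add_mul_one_sub_mul_self_le {t ε : ℝ} (ht : |t| ≤ 1) (hε : |ε| ≤ 1 / 2) :
    |t + ε * (1 - t * t)| ≤ 1 := by
  rw [abs_le] at *
  obtain ⟨ht₁, ht₂⟩ := ht
  obtain ⟨hε₁, hε₂⟩ := hε
  constructor <;> nlinarith [mul_nonneg (sub_nonneg.2 ht₂) (neg_le_iff_add_nonneg.1 ht₁)]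

theorem eq_of_norm_combo_eq {E : Type*} [NormedAddCommGroup E] [NormedSpace ℝ E]
    [StrictConvexSpace ℝ E] {x y : E} {r μ : ℝ} (hx : ‖x‖ ≤ r) (hy : ‖y‖ ≤ r) (hμ₀ : 0 < μ)
    (hμ₁ : μ < 1) (h : ‖μ • x + (1 - μ) • y‖ = r) : x = y := by
  by_contra hne
  exact (norm_combo_lt_of_ne hx hy hne hμ₀ (sub_pos.2 hμ₁) (add_sub_cancel μ 1)).ne h

theorem ContinuousLinearMap.eq_of_norm_map_eq_combo {𝕜 E F : Type*} [NontriviallyNormedField 𝕜]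
    [NormedAddCommGroup E] [NormedSpace 𝕜 E] [NormedAddCommGroup F] [NormedSpace 𝕜 F]
    [NormedSpace ℝ F] [SMulCommClass 𝕜 ℝ F] [StrictConvexSpace ℝ F]
    {U T S : E →L[𝕜] F} (hU : ∀ x, ‖U x‖ = ‖x‖) (hT : ‖T‖ ≤ 1) (hS : ‖S‖ ≤ 1) {μ : ℝ}
    (hμ₀ : 0 < μ) (hμ₁ : μ < 1) (h : U = μ • T + (1 - μ) • S) : T = U ∧ S = U := by
  have hTS : T = S := ext fun x ↦
    eq_of_norm_combo_eq (T.le_of_opNorm_le hT x |>.trans_eq (one_mul _))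
      (S.le_of_opNorm_le hS x |>.trans_eq (one_mul _)) hμ₀ hμ₁ (by rw [← hU x, h]; rfl)
  subst hTS
  constructor <;> rw [h, ← add_smul, add_sub_cancel, one_smul]

section Involution

variable {R : Type*} [Ring R] [Algebra ℝ R]

theorem IsIdempotentElem.two_smul_sub_one_mul_self {p : R} (hp : IsIdempotentElem p) :
    ((2 : ℝ) • p - 1) * ((2 : ℝ) • p - 1) = 1 := by
  rw [sub_mul, mul_sub, mul_sub, smul_mul_smul_comm, hp.eq]
  simp only [one_mul, mul_one]
  module

theorem isIdempotentElem_half_smul_one_add {u : R} (hu : u * u = 1) :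
    IsIdempotentElem ((2⁻¹ : ℝ) • (1 + u)) := by
  rw [IsIdempotentElem, smul_mul_smul_comm, add_mul, mul_add, mul_add, hu]
  simp only [one_mul, mul_one]
  module

end Involution

theorem IsSelfAdjoint.add_smul_one_sub_mul_self {A : Type*} [Ring A] [StarRing A] [Module ℝ A]
    [StarModule ℝ A] {u : A} (hu : IsSelfAdjoint u) (ε : ℝ) :
    IsSelfAdjoint (u + ε • (1 - u * u)) :=
  hu.add ((IsSelfAdjoint.all ε).smul ((IsSelfAdjoint.one A).sub
    (by simpa only [hu.star_eq] using IsSelfAdjoint.star_mul_self u)))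

theorem IsSelfAdjoint.norm_add_smul_one_sub_mul_self_le {A : Type*} [CStarAlgebra A] {u : A}
    (hu : IsSelfAdjoint u) (hu₁ : ‖u‖ ≤ 1) {ε : ℝ} (hε : |ε| ≤ 1 / 2) :
    ‖u + ε • (1 - u * u)‖ ≤ 1 := by
  nontriviality A
  have hcfc : cfc (fun t : ℝ ↦ t + ε * (1 - t * t)) u = u + ε • (1 - u * u) := by
    rw [cfc_add .., cfc_id' .., cfc_const_mul .., cfc_sub .., cfc_const_one .., cfc_mul ..,
      cfc_id' ..]
  rw [← hcfc]
  refine norm_cfc_le zero_le_one fun t ht ↦ abs_add_mul_one_sub_mul_self_le ?_ hε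
  exact (spectrum.norm_le_norm_of_mem ht).trans hu₁

variable {H : Type*} [NormedAddCommGroup H] [InnerProductSpace ℂ H] [CompleteSpace H]

theorem extreme_points_unit_ball_selfadjoint (U : H →L[ℂ] H)
    (hU : IsSelfAdjoint U) (hUnorm : ‖U‖ ≤ 1) :
    (∀ T S : H →L[ℂ] H, IsSelfAdjoint T → ‖T‖ ≤ 1 → IsSelfAdjoint S → ‖S‖ ≤ 1 →
        ∀ μ : ℝ, 0 < μ → μ < 1 → U = μ • T + (1 - μ) • S → T = U ∧ S = U) ↔
      ∃ P : H →L[ℂ] H, IsSelfAdjoint P ∧ IsIdempotentElem P ∧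
        U = (2 : ℝ) • P - 1 := by
  constructor
  · intro hext
    have hhalf : |(1 / 2 : ℝ)| ≤ 1 / 2 := by norm_num
    obtain ⟨hTU, -⟩ := hext (U + (1 / 2 : ℝ) • (1 - U * U)) (U + (-(1 / 2) : ℝ) • (1 - U * U))
      (hU.add_smul_one_sub_mul_self _) (hU.norm_add_smul_one_sub_mul_self_le hUnorm hhalf)
      (hU.add_smul_one_sub_mul_self _)
      (hU.norm_add_smul_one_sub_mul_self_le hUnorm (by rwa [abs_neg]))
      (1 / 2) (by norm_num) (by norm_num) (by module)
    rw [add_eq_left, smul_eq_zero, sub_eq_zero] at hTU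
    have hUU : U * U = 1 := (hTU.resolve_left (by norm_num)).symm
    exact ⟨(2⁻¹ : ℝ) • (1 + U), (IsSelfAdjoint.all _).smul ((IsSelfAdjoint.one _).add hU),
      isIdempotentElem_half_smul_one_add hUU, by module⟩
  · rintro ⟨P, -, hP, rfl⟩ T S - hT - hS μ hμ₀ hμ₁ h
    have hiso : ∀ x, ‖((2 : ℝ) • P - 1) x‖ = ‖x‖ :=
      (ContinuousLinearMap.norm_map_iff_adjoint_comp_self _).2 <| by
        rw [hU.adjoint_eq]; exact hP.two_smul_sub_one_mul_self
    have : InnerProductSpaceable H := InnerProductSpace.toInnerProductSpaceable (𝕜 := ℂ)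
    exact ContinuousLinearMap.eq_of_norm_map_eq_combo hiso hT hS hμ₀ hμ₁ h
end

section
/- Let U be a self-adjoint unitary on a complex Hilbert space H. Then U ∈ {I, −I} if and only if for every self-adjoint unitary V on H one has ‖U − V‖ ∈ {0, 2}. -/
variable {H : Type*} [NormedAddCommGroup H] [InnerProductSpace ℂ H] [CompleteSpace H]
  [Nontrivial H]

local notation "⟪" x ", " y "⟫" => @inner ℂ _ _ x y

private lemma norm_zero_or_two_aux {A : H →L[ℂ] H} (hA : IsSelfAdjoint A)
    (h2 : A * A = A + A) : ‖A‖ = 0 ∨ ‖A‖ = 2 := by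
  have h1 : ‖A‖ * ‖A‖ = ‖A * A‖ := by
    conv_rhs => rw [show A * A = star A * A from by rw [hA.star_eq]]
    exact (CStarRing.norm_star_mul_self (x := A)).symm
  have h3 : ‖A * A‖ = 2 * ‖A‖ := by
    rw [h2]
    rw [show A + A = (2:ℝ) • A from (two_smul ℝ A).symm, norm_smul]
    simp
  rcases eq_or_ne ‖A‖ 0 with h | h
  · exact Or.inl h
  · right
    have h4 := h1.trans h3
    rw [mul_comm 2 ‖A‖] at h4
    exact mul_left_cancel₀ h h4

theorem selfadjoint_unitary_pm_one_iff (U : H →L[ℂ] H)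
    (hU : IsSelfAdjoint U) (hU2 : U * U = 1) :
    (U = 1 ∨ U = -1) ↔
      ∀ V : H →L[ℂ] H, IsSelfAdjoint V → V * V = 1 →
        (‖U - V‖ = 0 ∨ ‖U - V‖ = 2) := by
  constructor
  · rintro (rfl | rfl) V hV hV2
    · -- A = 1 - V satisfies A² = A + A
      refine norm_zero_or_two_aux ((IsSelfAdjoint.one _).sub hV) ?_
      simp only [sub_mul, mul_sub, one_mul, mul_one, hV2]
      abel
    · -- A = -1 - V : A² = 1 + 2V + V² = 2 + 2V, A + A = -2 - 2V; use -A
      rw [show (-1 : H →L[ℂ] H) - V = -(1 + V) from by abel]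
      rw [norm_neg]
      refine norm_zero_or_two_aux ((IsSelfAdjoint.one _).add hV) ?_
      simp only [add_mul, mul_add, one_mul, mul_one, hV2]
      abel
  · intro h
    by_contra hc
    push_neg at hc
    obtain ⟨h1, h2⟩ := hc
    have hUU : ∀ z, U (U z) = z := by
      intro z
      have := ContinuousLinearMap.ext_iff.mp hU2 z
      simpa [ContinuousLinearMap.mul_apply] using this
    have hsym : ∀ x y : H, ⟪U x, y⟫ = ⟪x, U y⟫ :=
      (ContinuousLinearMap.isSelfAdjoint_iff_isSymmetric.mp hU)
    obtain ⟨x, hx⟩ : ∃ x, U x ≠ -x := by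
      by_contra hx; push_neg at hx
      exact h2 (by ext z; simpa using hx z)
    obtain ⟨y, hy⟩ : ∃ y, U y ≠ y := by
      by_contra hy; push_neg at hy
      exact h1 (by ext z; simpa using hy z)
    set e0 := U x + x with he0def
    have hUe0 : U e0 = e0 := by simp [he0def, map_add, hUU x, add_comm]
    have he0 : e0 ≠ 0 := by
      intro hz; apply hx; rw [← sub_eq_zero]; simpa [he0def, sub_eq_add_neg] using hz
    set f0 := U y - y with hf0def
    have hUf0 : U f0 = -f0 := by simp [hf0def, map_sub, hUU y]
    have hf0 : f0 ≠ 0 := by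
      intro hz; apply hy; rw [← sub_eq_zero]; simpa [hf0def] using hz
    set e : H := (‖e0‖⁻¹ : ℂ) • e0 with hedef
    set f : H := (‖f0‖⁻¹ : ℂ) • f0 with hfdef
    have hne : ‖e‖ = 1 := norm_smul_inv_norm he0
    have hnf : ‖f‖ = 1 := norm_smul_inv_norm hf0
    have hUe : U e = e := by simp [hedef, map_smul, hUe0]
    have hUf : U f = -f := by simp [hfdef, map_smul, hUf0]
    have hee : ⟪e, e⟫ = 1 := by rw [inner_self_eq_norm_sq_to_K, hne]; norm_num
    have hff : ⟪f, f⟫ = 1 := by rw [inner_self_eq_norm_sq_to_K, hnf]; norm_num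
    have hef : ⟪e, f⟫ = 0 := by
      have hh := hsym e f
      rw [hUe, hUf, inner_neg_right] at hh
      linear_combination (hh : _) / 2
    have hfe : ⟪f, e⟫ = 0 := by
      rw [← inner_conj_symm, hef]; simp
    -- the construction
    set S : H →L[ℂ] H :=
      (innerSL ℂ e).smulRight (f - e) + (innerSL ℂ f).smulRight (e + f) with hSdef
    set P : H →L[ℂ] H :=
      (innerSL ℂ e).smulRight e + (innerSL ℂ f).smulRight f with hPdef
    have Sapp : ∀ z, S z = ⟪e, z⟫ • (f - e) + ⟪f, z⟫ • (e + f) := by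
      intro z; simp [hSdef]
    have Papp : ∀ z, P z = ⟪e, z⟫ • e + ⟪f, z⟫ • f := by
      intro z; simp [hPdef]
    have hsymE : ∀ z, ⟪e, U z⟫ = ⟪e, z⟫ := by
      intro z; rw [← hsym, hUe]
    have hsymF : ∀ z, ⟪f, U z⟫ = -⟪f, z⟫ := by
      intro z; rw [← hsym, hUf, inner_neg_left]
    have hSsa : IsSelfAdjoint S := by
      rw [ContinuousLinearMap.isSelfAdjoint_iff_isSymmetric]
      intro a b
      simp only [ContinuousLinearMap.coe_coe, Sapp, inner_add_left, inner_add_right,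
        inner_smul_left, inner_smul_right, inner_sub_left, inner_sub_right,
        inner_conj_symm]
      ring
    have hPsa : IsSelfAdjoint P := by
      rw [ContinuousLinearMap.isSelfAdjoint_iff_isSymmetric]
      intro a b
      simp only [ContinuousLinearMap.coe_coe, Papp, inner_add_left, inner_add_right,
        inner_smul_left, inner_smul_right, inner_conj_symm]
      ring
    have hSS : S * S = (2:ℂ) • P := by
      ext z
      simp only [ContinuousLinearMap.mul_apply, ContinuousLinearMap.smul_apply, Sapp, Papp,
        inner_add_right, inner_smul_right, inner_sub_right, hee, hff, hef, hfe]
      module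
    have hPP : P * P = P := by
      ext z
      simp only [ContinuousLinearMap.mul_apply, Papp,
        inner_add_right, inner_smul_right, hee, hff, hef, hfe]
      module
    set V : H →L[ℂ] H := U + S with hVdef
    have hVsa : IsSelfAdjoint V := by
      rw [ContinuousLinearMap.isSelfAdjoint_iff_isSymmetric]
      intro a b
      have hS := ContinuousLinearMap.isSelfAdjoint_iff_isSymmetric.mp hSsa a b
      simp only [hVdef, ContinuousLinearMap.add_apply, inner_add_left, inner_add_right,
        ContinuousLinearMap.coe_coe] at *
      rw [hsym, hS]
    have hV2 : V * V = 1 := by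
      ext z
      simp only [hVdef, ContinuousLinearMap.mul_apply, ContinuousLinearMap.add_apply,
        ContinuousLinearMap.one_apply, map_add, Sapp, map_smul, map_sub,
        hUe, hUf, hUU, hsymE, hsymF,
        inner_add_right, inner_smul_right, inner_sub_right, inner_neg_right,
        hee, hff, hef, hfe]
      module
    have hnormPP : ‖P‖ * ‖P‖ = ‖P‖ := by
      have hcs := CStarRing.norm_star_mul_self (x := P)
      rw [hPsa.star_eq, hPP] at hcs
      linarith
    have hnormP : ‖P‖ ≤ 1 := by nlinarith [norm_nonneg P]
    have hnormSS : ‖S‖ * ‖S‖ ≤ 2 := by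
      have hcs := CStarRing.norm_star_mul_self (x := S)
      rw [hSsa.star_eq, hSS] at hcs
      rw [← hcs, norm_smul]
      simp only [Complex.norm_ofNat]
      nlinarith [norm_nonneg P]
    have hSlt : ‖S‖ < 2 := by nlinarith [norm_nonneg S]
    have hSne : S ≠ 0 := by
      intro hz
      have hz' : S e = 0 := by rw [hz]; rfl
      rw [Sapp, hee, hfe] at hz'
      simp only [one_smul, zero_smul, add_zero, sub_eq_zero] at hz'
      rw [hz', hee] at hef
      exact one_ne_zero hef
    have hUV : U - V = -S := by rw [hVdef]; abel
    rcases h V hVsa hV2 with h0 | h2'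
    · rw [hUV, norm_neg, norm_eq_zero] at h0
      exact hSne h0
    · rw [hUV, norm_neg] at h2'
      exact absurd h2' (ne_of_lt hSlt)
end
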